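/- Let X be a locally compact metric space, F : X → 𝒫(X) an upper semicontinuous multivalued map with compact values, and let K ⊆ N be compact subsets of X with K ∩ Inv⁺N = ∅. Then: (i) F_{N,n}(K) = ∅ for all but finitely many n > 0; (ii) the multivalued map F_N⁺ is upper semicontinuous on K; (iii) F_N⁺(K) ∩ Inv⁺N = ∅. The analogous statements hold with Inv⁻N, F_{N,−n} and F_N⁻ in place of Inv⁺N, F_{N,n} and F_N⁺. -/
import Mathlib


open Set Topology

/-- The image of a set under a multivalued map. -/
def MVImage {Y : Type*} (F : Y → Set Y) (A : Set Y) : Set Y :=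
  ⋃ y ∈ A, F y

/-- Upper semicontinuity of a multivalued map: the large counter image of every
closed set is closed. -/
def IsUSC {Y : Type*} [TopologicalSpace Y] (F : Y → Set Y) : Prop :=
  ∀ B : Set Y, IsClosed B → IsClosed {y | (F y ∩ B).Nonempty}

/-- The invariant part of `N` with respect to `F`: points admitting a full
solution (in `N`) through them. -/
def InvPart {Y : Type*} (F : Y → Set Y) (N : Set Y) : Set Y :=
  {y | ∃ σ : ℤ → Y, (∀ n : ℤ, σ n ∈ N) ∧ σ 0 = y ∧ ∀ n : ℤ, σ (n + 1) ∈ F (σ n)}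

/-- The `F`-boundary of a set `A`: `cl A ∩ cl (F(A) \ A)`. -/
def FBoundary {Y : Type*} [TopologicalSpace Y] (F : Y → Set Y) (A : Set Y) : Set Y :=
  closure A ∩ closure (MVImage F A \ A)

/-- `(P₁, P₂)` is a weak index pair for `F` in `N`. -/
structure IsWeakIndexPair {Y : Type*} [TopologicalSpace Y] (F : Y → Set Y)
    (N P₁ P₂ : Set Y) : Prop where
  compact₁ : IsCompact P₁
  compact₂ : IsCompact P₂
  subset₂₁ : P₂ ⊆ P₁
  subset₁N : P₁ ⊆ N
  mapsInto₁ : MVImage F P₁ ∩ N ⊆ P₁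
  mapsInto₂ : MVImage F P₂ ∩ N ⊆ P₂
  fBoundary_subset : FBoundary F P₁ ⊆ P₂
  inv_subset : InvPart F N ⊆ interior (P₁ \ P₂)
  diff_subset : P₁ \ P₂ ⊆ interior N

/-- The positive invariant part of `N` with respect to `F`: points admitting a
forward solution (in `N`) through them. -/
def InvPlus {Y : Type*} (F : Y → Set Y) (N : Set Y) : Set Y :=
  {y | ∃ σ : ℕ → Y, (∀ n : ℕ, σ n ∈ N) ∧ σ 0 = y ∧ ∀ n : ℕ, σ (n + 1) ∈ F (σ n)}

/-- The negative invariant part of `N` with respect to `F`: points admitting a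
backward solution (in `N`) through them (`σ k` stands for the value at `-k`). -/
def InvMinus {Y : Type*} (F : Y → Set Y) (N : Set Y) : Set Y :=
  {y | ∃ σ : ℕ → Y, (∀ n : ℕ, σ n ∈ N) ∧ σ 0 = y ∧ ∀ n : ℕ, σ n ∈ F (σ (n + 1))}

/-- `FN F N n x` is the set of points reachable from `x` by a solution of
length `n` staying in `N` (the map `F_{N,n}`). -/
def FN {Y : Type*} (F : Y → Set Y) (N : Set Y) (n : ℕ) (x : Y) : Set Y :=
  {y | ∃ σ : ℕ → Y, σ 0 = x ∧ σ n = y ∧ (∀ k ≤ n, σ k ∈ N) ∧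
    ∀ k < n, σ (k + 1) ∈ F (σ k)}

/-- `FNneg F N n x` is the set of points from which `x` is reachable by a
solution of length `n` staying in `N` (the map `F_{N,-n}`). -/
def FNneg {Y : Type*} (F : Y → Set Y) (N : Set Y) (n : ℕ) (x : Y) : Set Y :=
  {y | ∃ σ : ℕ → Y, σ 0 = y ∧ σ n = x ∧ (∀ k ≤ n, σ k ∈ N) ∧
    ∀ k < n, σ (k + 1) ∈ F (σ k)}

/-- The map `F_N⁺`. -/
def FNplus {Y : Type*} (F : Y → Set Y) (N : Set Y) (x : Y) : Set Y :=
  ⋃ n : ℕ, FN F N n x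

/-- The map `F_N⁻`. -/
def FNminus {Y : Type*} (F : Y → Set Y) (N : Set Y) (x : Y) : Set Y :=
  ⋃ n : ℕ, FNneg F N n x

section Helpers

variable {X : Type*} [MetricSpace X]

/-- An usc map with compact values has closed graph. -/
lemma graphClosed {F : X → Set X} (hF : IsUSC F) (hFc : ∀ x, IsCompact (F x)) :
    IsClosed {p : X × X | p.2 ∈ F p.1} := by
  rw [← isOpen_compl_iff, isOpen_iff_mem_nhds]
  rintro ⟨a, b⟩ hab
  simp only [mem_compl_iff, mem_setOf_eq] at hab
  obtain ⟨ε, hε, hball⟩ : ∃ ε > 0, Metric.closedBall b ε ⊆ (F a)ᶜ := by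
    have h1 : (F a)ᶜ ∈ nhds b := (hFc a).isClosed.isOpen_compl.mem_nhds hab
    rcases Metric.nhds_basis_closedBall.mem_iff.mp h1 with ⟨ε, hε, h⟩
    exact ⟨ε, hε, h⟩
  have hV : IsOpen {y | (F y ∩ Metric.closedBall b ε).Nonempty}ᶜ :=
    (hF _ Metric.isClosed_closedBall).isOpen_compl
  have haV : a ∈ {y | (F y ∩ Metric.closedBall b ε).Nonempty}ᶜ := by
    rintro ⟨z, hz1, hz2⟩; exact hball hz2 hz1
  rw [mem_nhds_prod_iff]
  refine ⟨_, hV.mem_nhds haV, Metric.ball b ε, Metric.ball_mem_nhds b hε, ?_⟩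
  rintro ⟨a', b'⟩ ⟨ha', hb'⟩
  simp only [mem_compl_iff, mem_setOf_eq] at ha' ⊢
  exact fun hmem => ha' ⟨b', hmem, Metric.ball_subset_closedBall hb'⟩

lemma piN_closed {N : Set X} (hN : IsClosed N) :
    IsClosed {σ : ℕ → X | ∀ k, σ k ∈ N} := by
  have h : {σ : ℕ → X | ∀ k, σ k ∈ N} = ⋂ k, (fun σ : ℕ → X => σ k) ⁻¹' N := by
    ext; simp
  rw [h]; exact isClosed_iInter fun k => hN.preimage (continuous_apply k)

lemma piN_compact {N : Set X} (hN : IsCompact N) :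
    IsCompact {σ : ℕ → X | ∀ k, σ k ∈ N} := by
  have h : {σ : ℕ → X | ∀ k, σ k ∈ N} = Set.pi univ (fun _ : ℕ => N) := by
    ext; simp [Set.mem_pi]
  rw [h]; exact isCompact_univ_pi fun _ => hN

lemma chainSet_closed (R : X → X → Prop) (hR : IsClosed {p : X × X | R p.1 p.2})
    (n : ℕ) : IsClosed {σ : ℕ → X | ∀ k < n, R (σ k) (σ (k + 1))} := by
  have h : {σ : ℕ → X | ∀ k < n, R (σ k) (σ (k + 1))} =
      ⋂ k ∈ Finset.range n,
        (fun σ : ℕ → X => (σ k, σ (k + 1))) ⁻¹' {p : X × X | R p.1 p.2} := by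
    ext σ; simp [Finset.mem_range]
  rw [h]
  exact isClosed_biInter fun k _ =>
    hR.preimage ((continuous_apply k).prodMk (continuous_apply (k + 1)))

/-- Compactness (a diagonal argument): arbitrarily long chains in a compact set
starting in a closed set yield an infinite chain. -/
lemma exists_infinite_chain (R : X → X → Prop)
    (hR : IsClosed {p : X × X | R p.1 p.2})
    {N K : Set X} (hN : IsCompact N) (hK : IsClosed K)
    (h : ∀ n : ℕ, ∃ σ : ℕ → X, σ 0 ∈ K ∧ (∀ k, σ k ∈ N) ∧
      ∀ k < n, R (σ k) (σ (k + 1))) :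
    ∃ σ : ℕ → X, σ 0 ∈ K ∧ (∀ k, σ k ∈ N) ∧ ∀ k, R (σ k) (σ (k + 1)) := by
  set S : ℕ → Set (ℕ → X) := fun n =>
    {σ | σ 0 ∈ K ∧ (∀ k, σ k ∈ N) ∧ ∀ k < n, R (σ k) (σ (k + 1))} with hS
  have hScl : ∀ n, IsClosed (S n) := by
    intro n
    have h1 : IsClosed ((fun σ : ℕ → X => σ 0) ⁻¹' K) := hK.preimage (continuous_apply 0)
    have h2 : IsClosed {σ : ℕ → X | ∀ k, σ k ∈ N} := piN_closed hN.isClosed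
    have h3 := chainSet_closed R hR n
    have : S n = ((fun σ : ℕ → X => σ 0) ⁻¹' K) ∩
        ({σ : ℕ → X | ∀ k, σ k ∈ N} ∩ {σ : ℕ → X | ∀ k < n, R (σ k) (σ (k + 1))}) := rfl
    rw [this]; exact h1.inter (h2.inter h3)
  have hSsub : ∀ n, S n ⊆ {σ : ℕ → X | ∀ k, σ k ∈ N} := fun n σ hσ => hσ.2.1
  have hScpt : ∀ n, IsCompact (S n) :=
    fun n => (piN_compact hN).of_isClosed_subset (hScl n) (hSsub n)
  have hSmono : ∀ n, S (n + 1) ⊆ S n := by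
    rintro n σ ⟨h1, h2, h3⟩
    exact ⟨h1, h2, fun k hk => h3 k (by omega)⟩
  have hSne : ∀ n, (S n).Nonempty := by
    intro n; obtain ⟨σ, h1, h2, h3⟩ := h n; exact ⟨σ, h1, h2, h3⟩
  obtain ⟨σ, hσ⟩ := IsCompact.nonempty_iInter_of_sequence_nonempty_isCompact_isClosed
    S hSmono hSne (hScpt 0) hScl
  have hmem : ∀ n, σ ∈ S n := by simpa [mem_iInter] using hσ
  exact ⟨σ, (hmem 0).1, (hmem 0).2.1, fun k => (hmem (k + 1)).2.2 k (by omega)⟩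

/-- The set of points reachable (at coordinate `o`) by chains of length `n`
inside a compact `N` hitting a closed `B` at coordinate `i` is compact. -/
lemma reach_compact {F : X → Set X} (hF : IsUSC F) (hFc : ∀ x, IsCompact (F x))
    {N B : Set X} (hN : IsCompact N) (hB : IsClosed B) (n i o : ℕ) :
    IsCompact ((fun σ : ℕ → X => σ o) ''
      {σ | (∀ k, σ k ∈ N) ∧ σ i ∈ B ∧ ∀ k < n, σ (k + 1) ∈ F (σ k)}) := by
  apply IsCompact.image _ (continuous_apply o)
  apply (piN_compact hN).of_isClosed_subset
  · have h1 : IsClosed {σ : ℕ → X | ∀ k, σ k ∈ N} := piN_closed hN.isClosed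
    have h2 : IsClosed ((fun σ : ℕ → X => σ i) ⁻¹' B) := hB.preimage (continuous_apply i)
    have h3 := chainSet_closed (fun a b => b ∈ F a) (graphClosed hF hFc) n
    have heq : {σ : ℕ → X | (∀ k, σ k ∈ N) ∧ σ i ∈ B ∧ ∀ k < n, σ (k + 1) ∈ F (σ k)} =
        {σ : ℕ → X | ∀ k, σ k ∈ N} ∩ (((fun σ : ℕ → X => σ i) ⁻¹' B) ∩
          {σ : ℕ → X | ∀ k < n, σ (k + 1) ∈ F (σ k)}) := rfl
    rw [heq]; exact h1.inter (h2.inter h3)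
  · exact fun σ hσ => hσ.1

end Helpers

/-- For compact `K ⊆ N` with `K ∩ Inv⁺N = ∅` (resp. `K ∩ Inv⁻N = ∅`):
(i) `F_{N,n}(K) = ∅` for all but finitely many `n > 0` (resp. `n < 0`);
(ii) `F_N⁺` (resp. `F_N⁻`) is usc on `K`;
(iii) `F_N⁺(K) ∩ Inv⁺N = ∅` (resp. `F_N⁻(K) ∩ Inv⁻N = ∅`). -/
theorem forward_backward_escape {X : Type*} [MetricSpace X]
    [LocallyCompactSpace X]
    (F : X → Set X) (hF : IsUSC F) (hFc : ∀ x, IsCompact (F x))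
    (K N : Set X) (hK : IsCompact K) (hN : IsCompact N) (hKN : K ⊆ N) :
    (K ∩ InvPlus F N = ∅ →
      {n : ℕ | 0 < n ∧ (⋃ x ∈ K, FN F N n x).Nonempty}.Finite ∧
      (∀ B : Set X, IsClosed B →
        IsClosed {x | x ∈ K ∧ (FNplus F N x ∩ B).Nonempty}) ∧
      (⋃ x ∈ K, FNplus F N x) ∩ InvPlus F N = ∅) ∧
    (K ∩ InvMinus F N = ∅ →
      {n : ℕ | 0 < n ∧ (⋃ x ∈ K, FNneg F N n x).Nonempty}.Finite ∧
      (∀ B : Set X, IsClosed B →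
        IsClosed {x | x ∈ K ∧ (FNminus F N x ∩ B).Nonempty}) ∧
      (⋃ x ∈ K, FNminus F N x) ∩ InvMinus F N = ∅) := by
  have hGr : IsClosed {p : X × X | p.2 ∈ F p.1} := graphClosed hF hFc
  have hGr' : IsClosed {p : X × X | p.1 ∈ F p.2} := by
    have h : {p : X × X | p.1 ∈ F p.2} = Prod.swap ⁻¹' {p : X × X | p.2 ∈ F p.1} := rfl
    rw [h]; exact hGr.preimage continuous_swap
  constructor
  · -- positive part
    intro hplus
    have key : ∃ M : ℕ, ∀ n, M ≤ n → ∀ x ∈ K, FN F N n x = ∅ := by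
      by_contra hcon
      push_neg at hcon
      have h' : ∀ m : ℕ, ∃ σ : ℕ → X, σ 0 ∈ K ∧ (∀ k, σ k ∈ N) ∧
          ∀ k < m, σ (k + 1) ∈ F (σ k) := by
        intro m
        obtain ⟨n, hmn, x, hxK, hne⟩ := hcon m
        obtain ⟨y, σ, hσ0, hσn, hσN, hσc⟩ := hne
        refine ⟨fun k => σ (min k n), ?_, fun k => hσN _ (min_le_right k n), ?_⟩
        · have h0 : min 0 n = 0 := by omega
          simp only [h0, hσ0, hxK]
        · intro k hk
          have h1 : min k n = k := by omega
          have h2 : min (k + 1) n = k + 1 := by omega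
          simp only [h1, h2]
          exact hσc k (by omega)
      obtain ⟨σ, hσK, hσN, hσc⟩ :=
        exists_infinite_chain (fun a b => b ∈ F a) hGr hN hK.isClosed h'
      have hmem : σ 0 ∈ K ∩ InvPlus F N := ⟨hσK, σ, hσN, rfl, hσc⟩
      rw [hplus] at hmem
      exact hmem
    obtain ⟨M, hM⟩ := key
    refine ⟨Set.Finite.subset (finite_Iio M) ?_, ?_, ?_⟩
    · rintro n ⟨hn, y, hy⟩
      simp only [mem_iUnion] at hy
      obtain ⟨x, hxK, hyx⟩ := hy
      by_contra hlt
      rw [hM n (by simpa using hlt) x hxK] at hyx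
      exact hyx
    · intro B hB
      have heq : {x | x ∈ K ∧ (FNplus F N x ∩ B).Nonempty} =
          K ∩ ⋃ n ∈ Finset.range M, (fun σ : ℕ → X => σ 0) ''
            {σ | (∀ k, σ k ∈ N) ∧ σ n ∈ B ∧ ∀ k < n, σ (k + 1) ∈ F (σ k)} := by
        ext x
        simp only [mem_setOf_eq, mem_inter_iff, mem_iUnion, Finset.mem_range, mem_image,
          exists_prop]
        constructor
        · rintro ⟨hxK, y, hy, hyB⟩
          obtain ⟨n, σ, hσ0, hσn, hσN, hσc⟩ := mem_iUnion.mp hy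
          have hnM : n < M := by
            by_contra hge
            have hemp : FN F N n x = ∅ := hM n (by omega) x hxK
            have hmem : y ∈ FN F N n x := ⟨σ, hσ0, hσn, hσN, hσc⟩
            rw [hemp] at hmem
            exact hmem
          refine ⟨hxK, n, hnM, fun k => σ (min k n),
            ⟨fun k => hσN _ (min_le_right k n), ?_, ?_⟩, ?_⟩
          · simp only [min_self, hσn]; exact hyB
          · intro k hk
            have h1 : min k n = k := by omega
            have h2 : min (k + 1) n = k + 1 := by omega
            simp only [h1, h2]; exact hσc k hk
          · have h0 : min 0 n = 0 := by omega
            simp only [h0, hσ0]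
        · rintro ⟨hxK, n, _, σ, ⟨hσN, hσB, hσc⟩, hσ0⟩
          exact ⟨hxK, σ n, mem_iUnion.mpr ⟨n, σ, hσ0, rfl, fun k _ => hσN k, hσc⟩, hσB⟩
      rw [heq]
      exact hK.isClosed.inter (Set.Finite.isClosed_biUnion (Finset.range M).finite_toSet
        fun n _ => (reach_compact hF hFc hN hB n n 0).isClosed)
    · apply eq_empty_iff_forall_notMem.mpr
      rintro y ⟨hy1, hy2⟩
      simp only [mem_iUnion] at hy1
      obtain ⟨x, hxK, hyx⟩ := hy1
      obtain ⟨n, σ, hσ0, hσn, hσN, hσc⟩ := mem_iUnion.mp hyx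
      obtain ⟨τ, hτN, hτ0, hτc⟩ := hy2
      set ρ : ℕ → X := fun k => if k < n then σ k else τ (k - n) with hρ
      have hρ0 : ρ 0 = x := by
        by_cases h : 0 < n
        · simp only [hρ, if_pos h, hσ0]
        · have hn0 : n = 0 := by omega
          have hyx' : y = x := by rw [← hσn, hn0, hσ0]
          simp only [hρ, hn0, Nat.lt_irrefl, if_false, Nat.sub_zero, hτ0, hyx']
      have hρN : ∀ k, ρ k ∈ N := by
        intro k
        by_cases h : k < n
        · simp only [hρ, if_pos h]; exact hσN k (by omega)
        · simp only [hρ, if_neg h]; exact hτN _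
      have hρc : ∀ k, ρ (k + 1) ∈ F (ρ k) := by
        intro k
        by_cases h1 : k + 1 < n
        · have h2 : k < n := by omega
          simp only [hρ, if_pos h1, if_pos h2]
          exact hσc k h2
        · by_cases h2 : k < n
          · have h3 : k + 1 - n = 0 := by omega
            simp only [hρ, if_neg h1, if_pos h2, h3, hτ0]
            have h4 : y = σ (k + 1) := by rw [← hσn]; congr 1; omega
            rw [h4]
            exact hσc k h2
          · simp only [hρ, if_neg h1, if_neg h2]
            have h4 : k + 1 - n = (k - n) + 1 := by omega
            rw [h4]
            exact hτc (k - n)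
      have hmem : x ∈ K ∩ InvPlus F N := ⟨hxK, ρ, hρN, hρ0, hρc⟩
      rw [hplus] at hmem
      exact hmem
  · -- negative part
    intro hminus
    have key : ∃ M : ℕ, ∀ n, M ≤ n → ∀ x ∈ K, FNneg F N n x = ∅ := by
      by_contra hcon
      push_neg at hcon
      have h' : ∀ m : ℕ, ∃ σ : ℕ → X, σ 0 ∈ K ∧ (∀ k, σ k ∈ N) ∧
          ∀ k < m, (fun a b => a ∈ F b) (σ k) (σ (k + 1)) := by
        intro m
        obtain ⟨n, hmn, x, hxK, hne⟩ := hcon m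
        obtain ⟨y, σ, hσ0, hσn, hσN, hσc⟩ := hne
        refine ⟨fun k => σ (n - k), ?_, fun k => hσN _ (by omega), ?_⟩
        · simp only [Nat.sub_zero, hσn, hxK]
        · intro k hk
          have hkn : k < n := by omega
          have h1 : n - k = (n - (k + 1)) + 1 := by omega
          simp only []
          rw [h1]
          exact hσc (n - (k + 1)) (by omega)
      obtain ⟨σ, hσK, hσN, hσc⟩ :=
        exists_infinite_chain (fun a b => a ∈ F b) hGr' hN hK.isClosed h'
      have hmem : σ 0 ∈ K ∩ InvMinus F N := ⟨hσK, σ, hσN, rfl, hσc⟩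
      rw [hminus] at hmem
      exact hmem
    obtain ⟨M, hM⟩ := key
    refine ⟨Set.Finite.subset (finite_Iio M) ?_, ?_, ?_⟩
    · rintro n ⟨hn, y, hy⟩
      simp only [mem_iUnion] at hy
      obtain ⟨x, hxK, hyx⟩ := hy
      by_contra hlt
      rw [hM n (by simpa using hlt) x hxK] at hyx
      exact hyx
    · intro B hB
      have heq : {x | x ∈ K ∧ (FNminus F N x ∩ B).Nonempty} =
          K ∩ ⋃ n ∈ Finset.range M, (fun σ : ℕ → X => σ n) ''
            {σ | (∀ k, σ k ∈ N) ∧ σ 0 ∈ B ∧ ∀ k < n, σ (k + 1) ∈ F (σ k)} := by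
        ext x
        simp only [mem_setOf_eq, mem_inter_iff, mem_iUnion, Finset.mem_range, mem_image,
          exists_prop]
        constructor
        · rintro ⟨hxK, y, hy, hyB⟩
          obtain ⟨n, σ, hσ0, hσn, hσN, hσc⟩ := mem_iUnion.mp hy
          have hnM : n < M := by
            by_contra hge
            have hemp : FNneg F N n x = ∅ := hM n (by omega) x hxK
            have : y ∈ FNneg F N n x := ⟨σ, hσ0, hσn, hσN, hσc⟩
            rw [hemp] at this
            exact this
          refine ⟨hxK, n, hnM, fun k => σ (min k n),
            ⟨fun k => hσN _ (min_le_right k n), ?_, ?_⟩, ?_⟩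
          · have h0 : min 0 n = 0 := by omega
            simp only [h0, hσ0]; exact hyB
          · intro k hk
            have h1 : min k n = k := by omega
            have h2 : min (k + 1) n = k + 1 := by omega
            simp only [h1, h2]; exact hσc k hk
          · simp only [min_self, hσn]
        · rintro ⟨hxK, n, _, σ, ⟨hσN, hσB, hσc⟩, hσn⟩
          exact ⟨hxK, σ 0, mem_iUnion.mpr ⟨n, σ, rfl, hσn, fun k _ => hσN k, hσc⟩, hσB⟩
      rw [heq]
      exact hK.isClosed.inter (Set.Finite.isClosed_biUnion (Finset.range M).finite_toSet
        fun n _ => (reach_compact hF hFc hN hB n 0 n).isClosed)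
    · apply eq_empty_iff_forall_notMem.mpr
      rintro y ⟨hy1, hy2⟩
      simp only [mem_iUnion] at hy1
      obtain ⟨x, hxK, hyx⟩ := hy1
      obtain ⟨n, σ, hσ0, hσn, hσN, hσc⟩ := mem_iUnion.mp hyx
      obtain ⟨τ, hτN, hτ0, hτc⟩ := hy2
      set ρ : ℕ → X := fun k => if k < n then σ (n - k) else τ (k - n) with hρ
      have hρ0 : ρ 0 = x := by
        by_cases h : 0 < n
        · simp only [hρ, if_pos h, Nat.sub_zero, hσn]
        · have hn0 : n = 0 := by omega
          have hyx' : y = x := by rw [← hσ0, ← hσn, hn0]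
          simp only [hρ, hn0, Nat.lt_irrefl, if_false, Nat.sub_zero, hτ0, hyx']
      have hρN : ∀ k, ρ k ∈ N := by
        intro k
        by_cases h : k < n
        · simp only [hρ, if_pos h]; exact hσN _ (by omega)
        · simp only [hρ, if_neg h]; exact hτN _
      have hρc : ∀ k, ρ k ∈ F (ρ (k + 1)) := by
        intro k
        by_cases h1 : k + 1 < n
        · have h2 : k < n := by omega
          simp only [hρ, if_pos h1, if_pos h2]
          have h3 : n - k = (n - (k + 1)) + 1 := by omega
          rw [h3]
          exact hσc (n - (k + 1)) (by omega)
        · by_cases h2 : k < n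
          · have h3 : k + 1 - n = 0 := by omega
            have h4 : n - k = 1 := by omega
            simp only [hρ, if_neg h1, if_pos h2, h3, h4, hτ0]
            have h5 : y = σ 0 := hσ0.symm
            rw [h5]
            exact hσc 0 (by omega)
          · simp only [hρ, if_neg h1, if_neg h2]
            have h4 : k + 1 - n = (k - n) + 1 := by omega
            rw [h4]
            exact hτc (k - n)
      have hmem : x ∈ K ∩ InvMinus F N := ⟨hxK, ρ, hρN, hρ0, hρc⟩
      rw [hminus] at hmem
      exact hmem
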